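/- In coordinates (x¹, x²) on a 2-dimensional configuration space with PX = ∂/∂x¹ and λPX = σ ∂/∂x¹ + μ ∂/∂x², the first-order linear PDE system ∇(gλ)|_{Im P⊗2} = 0 for (σ, μ) is consistent (admits solutions for σ given μ) if and only if μ satisfies the compatibility condition ∂([11,2] μ)/∂x² = ∂([12,2] μ)/∂x¹, where [ij,k] are the Christoffel symbols of the first kind of g. -/

import Mathlib

open scoped Topology ENNReal NNReal
open MeasureTheory Set intervalIntegral

/-- Partial derivative in the first coordinate. -/
noncomputable def pd1 (f : ℝ × ℝ → ℝ) (p : ℝ × ℝ) : ℝ :=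
  deriv (fun x => f (x, p.2)) p.1

/-- Partial derivative in the second coordinate. -/
noncomputable def pd2 (f : ℝ × ℝ → ℝ) (p : ℝ × ℝ) : ℝ :=
  deriv (fun x => f (p.1, x)) p.2

/-- Christoffel symbol of the first kind [11,2]. -/
noncomputable def br112 (g11 g12 g22 : ℝ × ℝ → ℝ) (p : ℝ × ℝ) : ℝ :=
  (1/2) * (pd1 g12 p + pd1 g12 p - pd2 g11 p)

/-- Christoffel symbol of the first kind [12,2]. -/
noncomputable def br122 (g11 g12 g22 : ℝ × ℝ → ℝ) (p : ℝ × ℝ) : ℝ :=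
  (1/2) * (pd1 g22 p + pd2 g12 p - pd2 g12 p)

lemma pd1_of_hasFDerivAt {h : ℝ × ℝ → ℝ} {A : (ℝ × ℝ) →L[ℝ] ℝ} {p : ℝ × ℝ}
    (hh : HasFDerivAt h A p) : pd1 h p = A (1, 0) := by
  have hline : HasDerivAt (fun x : ℝ => (x, p.2)) ((1:ℝ), (0:ℝ)) p.1 :=
    (hasDerivAt_id p.1).prodMk (hasDerivAt_const p.1 p.2)
  exact (hh.comp_hasDerivAt_of_eq _ hline (by simp)).deriv

lemma pd2_of_hasFDerivAt {h : ℝ × ℝ → ℝ} {A : (ℝ × ℝ) →L[ℝ] ℝ} {p : ℝ × ℝ}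
    (hh : HasFDerivAt h A p) : pd2 h p = A (0, 1) := by
  have hline : HasDerivAt (fun x : ℝ => (p.1, x)) ((0:ℝ), (1:ℝ)) p.2 :=
    (hasDerivAt_const p.2 p.1).prodMk (hasDerivAt_id p.2)
  exact (hh.comp_hasDerivAt_of_eq _ hline (by simp)).deriv

lemma clm_ext2 {A B : (ℝ × ℝ) →L[ℝ] ℝ} (h1 : A (1, 0) = B (1, 0))
    (h2 : A (0, 1) = B (0, 1)) : A = B := by
  apply ContinuousLinearMap.ext
  rintro ⟨x, y⟩
  have hxy : ((x, y) : ℝ × ℝ) = x • ((1:ℝ), (0:ℝ)) + y • ((0:ℝ), (1:ℝ)) := by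
    simp [Prod.ext_iff]
  rw [hxy, A.map_add, B.map_add, A.map_smul, B.map_smul, A.map_smul, B.map_smul, h1, h2]

lemma clm_apply_pair {A : (ℝ × ℝ) →L[ℝ] ℝ} (x y : ℝ) :
    A (x, y) = x * A (1, 0) + y * A (0, 1) := by
  have hxy : ((x, y) : ℝ × ℝ) = x • ((1:ℝ), (0:ℝ)) + y • ((0:ℝ), (1:ℝ)) := by
    simp [Prod.ext_iff]
  rw [hxy, A.map_add, A.map_smul, A.map_smul]; simp

lemma contDiff_pd1 {h : ℝ × ℝ → ℝ} (hh : ContDiff ℝ (⊤ : ℕ∞) h) : ContDiff ℝ (⊤ : ℕ∞) (pd1 h) := by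
  have : pd1 h = fun p => fderiv ℝ h p (1, 0) := by
    funext p
    exact pd1_of_hasFDerivAt ((hh.differentiable (by simp) p).hasFDerivAt)
  rw [this]
  exact (hh.fderiv_right (le_of_eq (by rfl))).clm_apply contDiff_const

lemma contDiff_pd2 {h : ℝ × ℝ → ℝ} (hh : ContDiff ℝ (⊤ : ℕ∞) h) : ContDiff ℝ (⊤ : ℕ∞) (pd2 h) := by
  have : pd2 h = fun p => fderiv ℝ h p (0, 1) := by
    funext p
    exact pd2_of_hasFDerivAt ((hh.differentiable (by simp) p).hasFDerivAt)
  rw [this]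
  exact (hh.fderiv_right (le_of_eq (by rfl))).clm_apply contDiff_const

lemma pd_comm {h : ℝ × ℝ → ℝ} (hh : ContDiff ℝ (⊤ : ℕ∞) h) (p : ℝ × ℝ) :
    pd2 (pd1 h) p = pd1 (pd2 h) p := by
  have hfd : ContDiff ℝ (⊤ : ℕ∞) (fderiv ℝ h) := hh.fderiv_right (le_of_eq (by rfl))
  have h1 : pd1 h = fun q => fderiv ℝ h q (1, 0) := by
    funext q; exact pd1_of_hasFDerivAt ((hh.differentiable (by simp) q).hasFDerivAt)
  have h2 : pd2 h = fun q => fderiv ℝ h q (0, 1) := by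
    funext q; exact pd2_of_hasFDerivAt ((hh.differentiable (by simp) q).hasFDerivAt)
  have hG1 : HasFDerivAt (fun q => fderiv ℝ h q (1, 0))
      ((ContinuousLinearMap.apply ℝ ℝ ((1:ℝ),(0:ℝ))).comp (fderiv ℝ (fderiv ℝ h) p)) p :=
    (ContinuousLinearMap.apply ℝ ℝ ((1:ℝ),(0:ℝ))).hasFDerivAt.comp p
      ((hfd.differentiable (by simp) p).hasFDerivAt)
  have hG2 : HasFDerivAt (fun q => fderiv ℝ h q (0, 1))
      ((ContinuousLinearMap.apply ℝ ℝ ((0:ℝ),(1:ℝ))).comp (fderiv ℝ (fderiv ℝ h) p)) p :=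
    (ContinuousLinearMap.apply ℝ ℝ ((0:ℝ),(1:ℝ))).hasFDerivAt.comp p
      ((hfd.differentiable (by simp) p).hasFDerivAt)
  have hsymm : IsSymmSndFDerivAt ℝ h p :=
    (hh.contDiffAt).isSymmSndFDerivAt (by rw [minSmoothness_of_isRCLikeNormedField]; exact WithTop.coe_le_coe.2 le_top)
  rw [h1, h2, pd2_of_hasFDerivAt hG1, pd1_of_hasFDerivAt hG2]
  simpa using hsymm (0,1) (1,0)

noncomputable abbrev Jmap : (ℝ × ℝ) →L[ℝ] (ℝ × ℝ) × ℝ :=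
  (ContinuousLinearMap.id ℝ (ℝ × ℝ)).prod 0

lemma hasFDerivAt_parametric (K : (ℝ × ℝ) × ℝ → ℝ) (hK : ContDiff ℝ (⊤ : ℕ∞) K) (p : ℝ × ℝ) :
    HasFDerivAt (fun q => ∫ t in (0:ℝ)..1, K (q, t))
      (∫ t in (0:ℝ)..1, (fderiv ℝ K (p, t)).comp Jmap) p := by
  have hKc : Continuous K := hK.continuous
  have hKd : Differentiable ℝ K := hK.differentiable (by simp)
  have hfd : Continuous (fderiv ℝ K) := hK.continuous_fderiv (by simp)
  -- compact bound
  obtain ⟨C, hC⟩ : ∃ C, ∀ z ∈ (Metric.closedBall p 1 ×ˢ Icc (0:ℝ) 1),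
      ‖fderiv ℝ K z‖ ≤ C :=
    ((isCompact_closedBall p 1).prod isCompact_Icc).exists_bound_of_continuousOn
      hfd.continuousOn
  have hdiff : ∀ t ∈ Set.uIoc (0:ℝ) 1, ∀ x, HasFDerivAt (fun q => K (q, t))
      ((fderiv ℝ K (x, t)).comp Jmap) x := by
    intro t _ x
    have hline : HasFDerivAt (fun q : ℝ × ℝ => (q, t)) Jmap x :=
      (hasFDerivAt_id x).prodMk (hasFDerivAt_const t x)
    exact ((hKd (x, t)).hasFDerivAt).comp x hline
  have key := intervalIntegral.hasFDerivAt_integral_of_dominated_of_fderiv_le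
    (μ := volume) (F := fun (x : ℝ × ℝ) (t : ℝ) => K (x, t))
    (F' := fun x t => (fderiv ℝ K (x, t)).comp Jmap) (x₀ := p)
    (bound := fun _ => C * ‖(Jmap : (ℝ × ℝ) →L[ℝ] (ℝ × ℝ) × ℝ)‖)
    (a := 0) (b := 1) (s := Metric.ball p 1) (Metric.ball_mem_nhds p one_pos)
    (Filter.Eventually.of_forall fun x =>
      ((hKc.comp (Continuous.prodMk_right x)).aestronglyMeasurable))
    ((hKc.comp (Continuous.prodMk_right p)).intervalIntegrable 0 1)
    (((hfd.comp (Continuous.prodMk_right p)).clm_comp continuous_const).aestronglyMeasurable)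
    ?_ (intervalIntegrable_const) ?_
  · exact key
  · refine Filter.Eventually.of_forall fun t ht => fun x hx => ?_
    refine le_trans (ContinuousLinearMap.opNorm_comp_le _ _) ?_
    have hmem : (x, t) ∈ Metric.closedBall p 1 ×ˢ Icc (0:ℝ) 1 := by
      constructor
      · exact Metric.ball_subset_closedBall hx
      · rw [uIoc_of_le zero_le_one] at ht
        exact ⟨le_of_lt ht.1, ht.2⟩
    exact mul_le_mul_of_nonneg_right (hC _ hmem) (norm_nonneg _)
  · exact Filter.Eventually.of_forall fun t ht => fun x _ => hdiff t ht x

lemma poincare {f g : ℝ × ℝ → ℝ} (hf : ContDiff ℝ (⊤ : ℕ∞) f) (hg : ContDiff ℝ (⊤ : ℕ∞) g)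
    (hc : ∀ q, fderiv ℝ f q ((0:ℝ), (1:ℝ)) = fderiv ℝ g q ((1:ℝ), (0:ℝ))) :
    ∃ F : ℝ × ℝ → ℝ, ContDiff ℝ (⊤ : ℕ∞) F ∧ ∀ p, pd1 F p = f p ∧ pd2 F p = g p := by
  have hfd : Differentiable ℝ f := hf.differentiable (by simp)
  have hgd : Differentiable ℝ g := hg.differentiable (by simp)
  set K : (ℝ × ℝ) × ℝ → ℝ := fun z =>
    z.1.1 * f (z.2 * z.1.1, z.2 * z.1.2) + z.1.2 * g (z.2 * z.1.1, z.2 * z.1.2) with hKdef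
  have hinner : ContDiff ℝ (⊤ : ℕ∞) (fun z : (ℝ × ℝ) × ℝ => (z.2 * z.1.1, z.2 * z.1.2)) :=
    (contDiff_snd.mul contDiff_fst.fst).prodMk (contDiff_snd.mul contDiff_fst.snd)
  have hKc : ContDiff ℝ (⊤ : ℕ∞) K :=
    (contDiff_fst.fst.mul (hf.comp hinner)).add (contDiff_fst.snd.mul (hg.comp hinner))
  set D : (ℝ × ℝ) × ℝ → (ℝ × ℝ) →L[ℝ] ℝ := fun z => (fderiv ℝ K z).comp Jmap with hDdef
  set F : ℝ × ℝ → ℝ := fun q => ∫ t in (0:ℝ)..1, K (q, t) with hFdef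
  have hFD : ∀ p, HasFDerivAt F (∫ t in (0:ℝ)..1, D (p, t)) p :=
    fun p => hasFDerivAt_parametric K hKc p
  have hDcont : ∀ p : ℝ × ℝ, Continuous (fun t => D (p, t)) := fun p =>
    ((hKc.continuous_fderiv (by simp)).comp (Continuous.prodMk_right p)).clm_comp continuous_const
  have hDint : ∀ p : ℝ × ℝ, IntervalIntegrable (fun t => D (p, t)) volume 0 1 :=
    fun p => (hDcont p).intervalIntegrable 0 1
  have hKt : ∀ (t : ℝ) (x : ℝ × ℝ), HasFDerivAt (fun q => K (q, t)) (D (x, t)) x := by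
    intro t x
    have hline : HasFDerivAt (fun q : ℝ × ℝ => (q, t)) Jmap x :=
      (hasFDerivAt_id x).prodMk (hasFDerivAt_const t x)
    exact ((hKc.differentiable (by simp) (x, t)).hasFDerivAt).comp x hline
  -- value of D in direction (1,0)
  have hval1 : ∀ (p : ℝ × ℝ) (t : ℝ), (D (p, t)) (1, 0) =
      1 * f (t * p.1, t * p.2) + p.1 * (fderiv ℝ f (t * p.1, t * p.2)) (t, 0)
        + p.2 * (fderiv ℝ g (t * p.1, t * p.2)) (t, 0) := by
    intro p t
    have hline : HasDerivAt (fun x : ℝ => (x, p.2)) ((1:ℝ), (0:ℝ)) p.1 :=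
      (hasDerivAt_id p.1).prodMk (hasDerivAt_const p.1 p.2)
    have hcomp : HasDerivAt (fun x : ℝ => K ((x, p.2), t)) ((D (p, t)) (1, 0)) p.1 :=
      (hKt t p).comp_hasDerivAt_of_eq _ hline (by simp)
    have hlin : HasDerivAt (fun x : ℝ => (t * x, t * p.2)) ((t:ℝ), (0:ℝ)) p.1 := by
      have h1 : HasDerivAt (fun x : ℝ => t * x) t p.1 := by
        simpa using (hasDerivAt_id p.1).const_mul t
      exact h1.prodMk (hasDerivAt_const p.1 (t * p.2))
    have hfc : HasDerivAt (fun x : ℝ => f (t * x, t * p.2))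
        ((fderiv ℝ f (t * p.1, t * p.2)) (t, 0)) p.1 :=
      (hfd (t * p.1, t * p.2)).hasFDerivAt.comp_hasDerivAt p.1 hlin
    have hgc : HasDerivAt (fun x : ℝ => g (t * x, t * p.2))
        ((fderiv ℝ g (t * p.1, t * p.2)) (t, 0)) p.1 :=
      (hgd (t * p.1, t * p.2)).hasFDerivAt.comp_hasDerivAt p.1 hlin
    have htotal : HasDerivAt (fun x : ℝ => x * f (t * x, t * p.2) + p.2 * g (t * x, t * p.2))
        (1 * f (t * p.1, t * p.2) + p.1 * (fderiv ℝ f (t * p.1, t * p.2)) (t, 0)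
          + p.2 * (fderiv ℝ g (t * p.1, t * p.2)) (t, 0)) p.1 :=
      ((hasDerivAt_id p.1).mul hfc).add (hgc.const_mul p.2)
    exact hcomp.unique htotal
  have hval2 : ∀ (p : ℝ × ℝ) (t : ℝ), (D (p, t)) (0, 1) =
      p.1 * (fderiv ℝ f (t * p.1, t * p.2)) (0, t)
        + (1 * g (t * p.1, t * p.2) + p.2 * (fderiv ℝ g (t * p.1, t * p.2)) (0, t)) := by
    intro p t
    have hline : HasDerivAt (fun x : ℝ => (p.1, x)) ((0:ℝ), (1:ℝ)) p.2 :=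
      (hasDerivAt_const p.2 p.1).prodMk (hasDerivAt_id p.2)
    have hcomp : HasDerivAt (fun x : ℝ => K ((p.1, x), t)) ((D (p, t)) (0, 1)) p.2 :=
      (hKt t p).comp_hasDerivAt_of_eq _ hline (by simp)
    have hlin : HasDerivAt (fun x : ℝ => (t * p.1, t * x)) ((0:ℝ), (t:ℝ)) p.2 := by
      have h1 : HasDerivAt (fun x : ℝ => t * x) t p.2 := by
        simpa using (hasDerivAt_id p.2).const_mul t
      exact (hasDerivAt_const p.2 (t * p.1)).prodMk h1
    have hfc : HasDerivAt (fun x : ℝ => f (t * p.1, t * x))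
        ((fderiv ℝ f (t * p.1, t * p.2)) (0, t)) p.2 :=
      (hfd (t * p.1, t * p.2)).hasFDerivAt.comp_hasDerivAt p.2 hlin
    have hgc : HasDerivAt (fun x : ℝ => g (t * p.1, t * x))
        ((fderiv ℝ g (t * p.1, t * p.2)) (0, t)) p.2 :=
      (hgd (t * p.1, t * p.2)).hasFDerivAt.comp_hasDerivAt p.2 hlin
    have htotal : HasDerivAt (fun x : ℝ => p.1 * f (t * p.1, t * x) + x * g (t * p.1, t * x))
        (p.1 * (fderiv ℝ f (t * p.1, t * p.2)) (0, t)
          + (1 * g (t * p.1, t * p.2) + p.2 * (fderiv ℝ g (t * p.1, t * p.2)) (0, t))) p.2 :=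
      (hfc.const_mul p.1).add ((hasDerivAt_id p.2).mul hgc)
    exact hcomp.unique htotal
  -- integrals of the directional values
  have hi1 : ∀ p : ℝ × ℝ, (∫ t in (0:ℝ)..1, (D (p, t)) (1, 0)) = f p := by
    intro p
    have hψ : ∀ t : ℝ, HasDerivAt (fun u : ℝ => u * f (u * p.1, u * p.2))
        ((D (p, t)) (1, 0)) t := by
      intro t
      have hlin2 : HasDerivAt (fun u : ℝ => (u * p.1, u * p.2)) ((p.1 : ℝ), (p.2 : ℝ)) t := by
        have h1 : HasDerivAt (fun u : ℝ => u * p.1) p.1 t := by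
          simpa using (hasDerivAt_id t).mul_const p.1
        have h2 : HasDerivAt (fun u : ℝ => u * p.2) p.2 t := by
          simpa using (hasDerivAt_id t).mul_const p.2
        exact h1.prodMk h2
      have hfc2 : HasDerivAt (fun u : ℝ => f (u * p.1, u * p.2))
          ((fderiv ℝ f (t * p.1, t * p.2)) (p.1, p.2)) t :=
        (hfd (t * p.1, t * p.2)).hasFDerivAt.comp_hasDerivAt t hlin2
      have hu : HasDerivAt (fun u : ℝ => u * f (u * p.1, u * p.2))
          (1 * f (t * p.1, t * p.2) + t * (fderiv ℝ f (t * p.1, t * p.2)) (p.1, p.2)) t :=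
        (hasDerivAt_id t).mul hfc2
      have hexp : (D (p, t)) (1, 0) =
          1 * f (t * p.1, t * p.2) + t * (fderiv ℝ f (t * p.1, t * p.2)) (p.1, p.2) := by
        rw [hval1 p t, clm_apply_pair, clm_apply_pair (A := fderiv ℝ g (t * p.1, t * p.2)),
          clm_apply_pair (A := fderiv ℝ f (t * p.1, t * p.2)) p.1 p.2,
          ← hc (t * p.1, t * p.2)]
        ring
      rw [hexp]
      exact hu
    have hint1 : IntervalIntegrable (fun t => (D (p, t)) (1, 0)) volume 0 1 :=
      ((hDcont p).clm_apply continuous_const).intervalIntegrable 0 1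
    rw [intervalIntegral.integral_eq_sub_of_hasDerivAt (fun t _ => hψ t) hint1]
    simp
  have hi2 : ∀ p : ℝ × ℝ, (∫ t in (0:ℝ)..1, (D (p, t)) (0, 1)) = g p := by
    intro p
    have hψ : ∀ t : ℝ, HasDerivAt (fun u : ℝ => u * g (u * p.1, u * p.2))
        ((D (p, t)) (0, 1)) t := by
      intro t
      have hlin2 : HasDerivAt (fun u : ℝ => (u * p.1, u * p.2)) ((p.1 : ℝ), (p.2 : ℝ)) t := by
        have h1 : HasDerivAt (fun u : ℝ => u * p.1) p.1 t := by
          simpa using (hasDerivAt_id t).mul_const p.1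
        have h2 : HasDerivAt (fun u : ℝ => u * p.2) p.2 t := by
          simpa using (hasDerivAt_id t).mul_const p.2
        exact h1.prodMk h2
      have hgc2 : HasDerivAt (fun u : ℝ => g (u * p.1, u * p.2))
          ((fderiv ℝ g (t * p.1, t * p.2)) (p.1, p.2)) t :=
        (hgd (t * p.1, t * p.2)).hasFDerivAt.comp_hasDerivAt t hlin2
      have hu : HasDerivAt (fun u : ℝ => u * g (u * p.1, u * p.2))
          (1 * g (t * p.1, t * p.2) + t * (fderiv ℝ g (t * p.1, t * p.2)) (p.1, p.2)) t :=
        (hasDerivAt_id t).mul hgc2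
      have hexp : (D (p, t)) (0, 1) =
          1 * g (t * p.1, t * p.2) + t * (fderiv ℝ g (t * p.1, t * p.2)) (p.1, p.2) := by
        rw [hval2 p t, clm_apply_pair, clm_apply_pair (A := fderiv ℝ g (t * p.1, t * p.2)),
          clm_apply_pair (A := fderiv ℝ g (t * p.1, t * p.2)) p.1 p.2,
          hc (t * p.1, t * p.2)]
        ring
      rw [hexp]
      exact hu
    have hint2 : IntervalIntegrable (fun t => (D (p, t)) (0, 1)) volume 0 1 :=
      ((hDcont p).clm_apply continuous_const).intervalIntegrable 0 1
    rw [intervalIntegral.integral_eq_sub_of_hasDerivAt (fun t _ => hψ t) hint2]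
    simp
  -- pd values
  have hpd1 : ∀ p : ℝ × ℝ, pd1 F p = f p := by
    intro p
    rw [pd1_of_hasFDerivAt (hFD p), ContinuousLinearMap.intervalIntegral_apply (hDint p)]
    exact hi1 p
  have hpd2 : ∀ p : ℝ × ℝ, pd2 F p = g p := by
    intro p
    rw [pd2_of_hasFDerivAt (hFD p), ContinuousLinearMap.intervalIntegral_apply (hDint p)]
    exact hi2 p
  -- smoothness via analyticity
  set L : ℝ × ℝ → (ℝ × ℝ) →L[ℝ] ℝ := fun q =>
    f q • ContinuousLinearMap.fst ℝ ℝ ℝ + g q • ContinuousLinearMap.snd ℝ ℝ ℝ with hLdef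
  have hLsm : ContDiff ℝ (⊤ : ℕ∞) L := (hf.smul contDiff_const).add (hg.smul contDiff_const)
  have hFL : ∀ z, HasFDerivAt F (L z) z := by
    intro z
    have h := hFD z
    have heq : (∫ t in (0:ℝ)..1, D (z, t)) = L z := by
      apply clm_ext2
      · rw [ContinuousLinearMap.intervalIntegral_apply (hDint z), hi1 z]
        simp [hLdef]
      · rw [ContinuousLinearMap.intervalIntegral_apply (hDint z), hi2 z]
        simp [hLdef]
    rwa [heq] at h
  have hansm : ContDiff ℝ (⊤ : ℕ∞) F := by
    have hfderiv : fderiv ℝ F = L := funext fun z => (hFL z).fderiv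
    rw [contDiff_infty_iff_fderiv]
    exact ⟨fun z => (hFL z).differentiableAt, hfderiv ▸ hLsm⟩
  exact ⟨F, hansm, fun p => ⟨hpd1 p, hpd2 p⟩⟩

lemma pd1_const_mul {u : ℝ × ℝ → ℝ} (hu : ContDiff ℝ (⊤ : ℕ∞) u) (c : ℝ) (p : ℝ × ℝ) :
    pd1 (fun q => c * u q) p = c * pd1 u p := by
  unfold pd1
  have hdiff : DifferentiableAt ℝ (fun x : ℝ => u (x, p.2)) p.1 :=
    ((hu.differentiable (by simp)).comp
      (differentiable_id.prodMk (differentiable_const _))) p.1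
  exact deriv_const_mul c hdiff

lemma pd2_const_mul {u : ℝ × ℝ → ℝ} (hu : ContDiff ℝ (⊤ : ℕ∞) u) (c : ℝ) (p : ℝ × ℝ) :
    pd2 (fun q => c * u q) p = c * pd2 u p := by
  unfold pd2
  have hdiff : DifferentiableAt ℝ (fun x : ℝ => u (p.1, x)) p.2 :=
    ((hu.differentiable (by simp)).comp
      ((differentiable_const _).prodMk differentiable_id)) p.2
  exact deriv_const_mul c hdiff

/-- In coordinates with PX = ∂/∂x¹ (so g₁₁ = 1), the first-order linear PDE
system ∇(gλ)|_{Im P⊗2} = 0, which reads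
∂₁(σ + μg₁₂) = 2[11,2]μ and ∂₂(σ + μg₁₂) = 2[12,2]μ,
admits a solution σ for given μ iff ∂₂([11,2]μ) = ∂₁([12,2]μ). -/
theorem stmt_3 (g11 g12 g22 : ℝ × ℝ → ℝ) (μ : ℝ × ℝ → ℝ)
    (hg11 : ∀ p, g11 p = 1) (hg12 : ContDiff ℝ (⊤ : ℕ∞) g12) (hg22 : ContDiff ℝ (⊤ : ℕ∞) g22)
    (hμ : ContDiff ℝ (⊤ : ℕ∞) μ) :
    (∃ σ : ℝ × ℝ → ℝ, ContDiff ℝ (⊤ : ℕ∞) σ ∧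
      ∀ p : ℝ × ℝ,
        pd1 (fun q => σ q * g11 q + μ q * g12 q) p = 2 * br112 g11 g12 g22 p * μ p ∧
        pd2 (fun q => σ q * g11 q + μ q * g12 q) p = 2 * br122 g11 g12 g22 p * μ p) ↔
    (∀ p : ℝ × ℝ,
      pd2 (fun q => br112 g11 g12 g22 q * μ q) p
        = pd1 (fun q => br122 g11 g12 g22 q * μ q) p) := by
  -- identification of the Christoffel symbols
  have hg11fun : g11 = fun _ => (1:ℝ) := funext hg11
  have hbr1 : br112 g11 g12 g22 = fun p => pd1 g12 p := by
    funext p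
    unfold br112
    have h0 : pd2 g11 p = 0 := by
      unfold pd2
      rw [hg11fun]
      simp
    rw [h0]; ring
  have hbr2 : br122 g11 g12 g22 = fun p => (1/2) * pd1 g22 p := by
    funext p; unfold br122; ring
  have hA : ContDiff ℝ (⊤ : ℕ∞) (fun q => br112 g11 g12 g22 q * μ q) := by
    rw [hbr1]
    exact (contDiff_pd1 hg12).mul hμ
  have hB : ContDiff ℝ (⊤ : ℕ∞) (fun q => br122 g11 g12 g22 q * μ q) := by
    rw [hbr2]
    exact ((contDiff_const.mul (contDiff_pd1 hg22)).mul hμ)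
  constructor
  · rintro ⟨σ, hσ, hsys⟩ p
    have hhe : (fun q => σ q * g11 q + μ q * g12 q) = fun q => σ q + μ q * g12 q := by
      funext q; rw [hg11 q]; ring
    have hsm : ContDiff ℝ (⊤ : ℕ∞) (fun q => σ q * g11 q + μ q * g12 q) := by
      rw [hhe]; exact hσ.add (hμ.mul hg12)
    have heq1 : (fun q => br112 g11 g12 g22 q * μ q)
        = fun q => (1/2) * pd1 (fun q' => σ q' * g11 q' + μ q' * g12 q') q := by
      funext q
      have h := (hsys q).1
      rw [h]; ring
    have heq2 : (fun q => br122 g11 g12 g22 q * μ q)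
        = fun q => (1/2) * pd2 (fun q' => σ q' * g11 q' + μ q' * g12 q') q := by
      funext q
      have h := (hsys q).2
      rw [h]; ring
    rw [heq1, heq2, pd2_const_mul (contDiff_pd1 hsm) (1/2) p,
      pd1_const_mul (contDiff_pd2 hsm) (1/2) p, pd_comm hsm p]
  · intro hcompat
    have hcfd : ∀ q, fderiv ℝ (fun q' => br112 g11 g12 g22 q' * μ q') q ((0:ℝ), (1:ℝ))
        = fderiv ℝ (fun q' => br122 g11 g12 g22 q' * μ q') q ((1:ℝ), (0:ℝ)) := by
      intro q
      rw [← pd2_of_hasFDerivAt ((hA.differentiable (by simp) q).hasFDerivAt),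
        ← pd1_of_hasFDerivAt ((hB.differentiable (by simp) q).hasFDerivAt)]
      exact hcompat q
    obtain ⟨G, hG, hGpd⟩ := poincare hA hB hcfd
    refine ⟨fun q => 2 * G q - μ q * g12 q, (contDiff_const.mul hG).sub (hμ.mul hg12), ?_⟩
    intro p
    have hfun : (fun q => (2 * G q - μ q * g12 q) * g11 q + μ q * g12 q)
        = fun q => 2 * G q := by
      funext q; rw [hg11 q]; ring
    constructor
    · rw [hfun, pd1_const_mul hG 2 p, (hGpd p).1]; ring
    · rw [hfun, pd2_const_mul hG 2 p, (hGpd p).2]; ring
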